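/- arXiv:1911.05807 — 3 statements merged into one kernel-verified Lean document; each statement's English description precedes it below -/
import Mathlib

section
/- Let M, K be nonsingular real m×m matrices, A = [[2βM, 0, -M], [0, M, K^T], [-M, K, 0]], and P = [[0, K, 0], [0, M, K^T], [-M, K, 0]] for β > 0. Then for any y, z ∈ ℂ^m not both zero, the vector w = ((1/(2β))(z + M^{-1}Ky); y; z) satisfies A w = P w, i.e., w is an eigenvector of P^{-1}A with eigenvalue 1. -/
open Matrix

/-- A 3×3 block matrix with square m×m blocks. -/
def blk3 {R : Type*} (m : ℕ)
    (A B C D E F G H I : Matrix (Fin m) (Fin m) R) :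
    Matrix (Fin m ⊕ (Fin m ⊕ Fin m)) (Fin m ⊕ (Fin m ⊕ Fin m)) R :=
  Matrix.of <|
    Sum.elim (fun i => Sum.elim (A i) (Sum.elim (B i) (C i)))
      (Sum.elim (fun i => Sum.elim (D i) (Sum.elim (E i) (F i)))
        (fun i => Sum.elim (G i) (Sum.elim (H i) (I i))))

/-- A block vector with three m-blocks. -/
def vec3 {R : Type*} {m : ℕ} (x y z : Fin m → R) : Fin m ⊕ (Fin m ⊕ Fin m) → R :=
  Sum.elim x (Sum.elim y z)

lemma blk3_mulVec {R : Type*} [CommRing R] {m : ℕ}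
    (A B C D E F G H I : Matrix (Fin m) (Fin m) R) (x y z : Fin m → R) :
    blk3 m A B C D E F G H I *ᵥ vec3 x y z =
      vec3 (A *ᵥ x + B *ᵥ y + C *ᵥ z) (D *ᵥ x + E *ᵥ y + F *ᵥ z)
        (G *ᵥ x + H *ᵥ y + I *ᵥ z) := by
  funext i
  rcases i with i | i | i <;>
    simp [blk3, vec3, mulVec, dotProduct, Fintype.sum_sum_type, Finset.sum_add_distrib,
      add_assoc]

theorem stmt_1 {m : ℕ} (M K : Matrix (Fin m) (Fin m) ℝ)
    (hM : IsUnit M) (hK : IsUnit K) (β : ℝ) (hβ : 0 < β)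
    (y z : Fin m → ℂ) (hyz : y ≠ 0 ∨ z ≠ 0)
    (Mc : Matrix (Fin m) (Fin m) ℂ) (hMc : Mc = M.map Complex.ofReal)
    (Kc : Matrix (Fin m) (Fin m) ℂ) (hKc : Kc = K.map Complex.ofReal)
    (A P : Matrix (Fin m ⊕ (Fin m ⊕ Fin m)) (Fin m ⊕ (Fin m ⊕ Fin m)) ℂ)
    (hA : A = blk3 m ((2 * (β : ℂ)) • Mc) 0 (-Mc) 0 Mc Kcᵀ (-Mc) Kc 0)
    (hP : P = blk3 m 0 Kc 0 0 Mc Kcᵀ (-Mc) Kc 0)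
    (w : Fin m ⊕ (Fin m ⊕ Fin m) → ℂ)
    (hw : w = vec3 ((1 / (2 * (β : ℂ))) • (z + Mc⁻¹ *ᵥ (Kc *ᵥ y))) y z) :
    A *ᵥ w = P *ᵥ w ∧ w ≠ 0 := by
  have hMcU : IsUnit Mc := by
    rw [hMc]
    exact hM.map (Complex.ofRealHom.mapMatrix : Matrix (Fin m) (Fin m) ℝ →+* _)
  have hMcInv : Mc * Mc⁻¹ = 1 :=
    Matrix.mul_nonsing_inv _ ((Matrix.isUnit_iff_isUnit_det Mc).mp hMcU)
  have hβ' : (2 * (β : ℂ)) ≠ 0 := by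
    simp only [ne_eq, mul_eq_zero, Complex.ofReal_eq_zero]
    push_neg
    exact ⟨two_ne_zero, ne_of_gt hβ⟩
  constructor
  · rw [hA, hP, hw, blk3_mulVec, blk3_mulVec]
    have key : ((2 * (β : ℂ)) • Mc) *ᵥ ((1 / (2 * (β : ℂ))) • (z + Mc⁻¹ *ᵥ (Kc *ᵥ y))) =
        Kc *ᵥ y + Mc *ᵥ z := by
      rw [Matrix.smul_mulVec, Matrix.mulVec_smul, smul_smul, mul_one_div,
        div_self hβ', one_smul, Matrix.mulVec_add, Matrix.mulVec_mulVec,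
        Matrix.mulVec_mulVec, hMcInv, Matrix.one_mul, add_comm]
    simp only [key, Matrix.zero_mulVec, Matrix.neg_mulVec, smul_zero, add_zero, zero_add]
    have h1 : ∀ a b : Fin m → ℂ, a + b + -b = a := by intro a b; abel
    rw [h1 (Kc *ᵥ y) (Mc *ᵥ z)]
  · intro h
    rcases hyz with hy | hz
    · exact hy (funext fun i => by simpa [hw, vec3] using congrFun h (Sum.inr (Sum.inl i)))
    · exact hz (funext fun i => by simpa [hw, vec3] using congrFun h (Sum.inr (Sum.inr i)))
end

section
/- Let M, K be symmetric positive definite real m×m matrices with c₁ h² ≤ (xᵀ M x)/(xᵀ x) ≤ c₂ h² and d₁ h² ≤ (xᵀ K x)/(xᵀ x) ≤ d₂ for all nonzero x ∈ ℝ^m. Then (d₁² h²)/c₂ ≤ (xᵀ K M^{-1} K x)/(xᵀ x) ≤ d₂²/(c₁ h²) for all nonzero x ∈ ℝ^m. -/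
/-!
With `y = K x` the quadratic form of `K M⁻¹ K` at `x` is `yᵀ M⁻¹ y`. For a positive semidefinite
`A` with Rayleigh quotient in `[a, b]`, Cauchy–Schwarz for the form of `A`, applied to `x` and
`A x`, gives `a · xᵀAx ≤ |Ax|² ≤ b · xᵀAx`. For `A = K` this bounds `|y|²` between
`d₁² h⁴ |x|²` and `d₂² |x|²`; for `A = M` at `M⁻¹ y` it bounds `yᵀ M⁻¹ y` between
`|y|² / (c₂ h²)` and `|y|² / (c₁ h²)`.
-/

open Matrix

namespace Matrix

variable {n : Type*} [Fintype n] {A : Matrix n n ℝ} {a b : ℝ}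

section LinearOrderedRing

variable {R : Type*} [Ring R] [LinearOrder R] [IsStrictOrderedRing R]

theorem dotProduct_self_nonneg (x : n → R) : 0 ≤ x ⬝ᵥ x :=
  Finset.sum_nonneg fun i _ => mul_self_nonneg (x i)

theorem dotProduct_self_pos {x : n → R} (hx : x ≠ 0) : 0 < x ⬝ᵥ x :=
  (dotProduct_self_nonneg x).lt_of_ne' (dotProduct_self_eq_zero.not.mpr hx)

end LinearOrderedRing

theorem IsHermitian.dotProduct_mulVec_comm (hA : A.IsHermitian) (u v : n → ℝ) :
    u ⬝ᵥ A *ᵥ v = v ⬝ᵥ A *ᵥ u := by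
  rw [← dotProduct_transpose_mulVec, ← conjTranspose_eq_transpose_of_trivial, hA.eq]

theorem PosSemidef.sq_dotProduct_mulVec_le (hA : A.PosSemidef) (u v : n → ℝ) :
    (u ⬝ᵥ A *ᵥ v) ^ 2 ≤ (u ⬝ᵥ A *ᵥ u) * (v ⬝ᵥ A *ᵥ v) := by
  let _ := A.toSeminormedAddCommGroup hA
  let _ := A.toInnerProductSpace hA
  have hinner (x y : n → ℝ) : inner ℝ x y = x ⬝ᵥ A *ᵥ y := by
    rw [dotProduct_comm]; rfl
  simpa only [hinner, sq] using real_inner_mul_inner_self_le u v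

theorem sq_dotProduct_le (u v : n → ℝ) : (u ⬝ᵥ v) ^ 2 ≤ (u ⬝ᵥ u) * (v ⬝ᵥ v) := by
  classical
  simpa using PosSemidef.one.sq_dotProduct_mulVec_le u v

theorem PosSemidef.mulVec_dotProduct_mulVec_le (hA : A.PosSemidef)
    (hupper : ∀ x, x ⬝ᵥ A *ᵥ x ≤ b * (x ⬝ᵥ x)) (x : n → ℝ) :
    (A *ᵥ x) ⬝ᵥ (A *ᵥ x) ≤ b * (x ⬝ᵥ A *ᵥ x) := by
  have hcs := hA.sq_dotProduct_mulVec_le x (A *ᵥ x)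
  rw [hA.isHermitian.dotProduct_mulVec_comm x (A *ᵥ x)] at hcs
  have hP : 0 ≤ x ⬝ᵥ A *ᵥ x := by simpa using hA.dotProduct_mulVec_nonneg x
  have hbP : 0 ≤ b * (x ⬝ᵥ A *ᵥ x) := by
    rcases le_or_gt 0 b with hb0 | hb0
    · exact mul_nonneg hb0 hP
    · have hP0 : x ⬝ᵥ A *ᵥ x = 0 := by nlinarith [hupper x, dotProduct_self_nonneg x]
      simp [hP0]
  rcases (dotProduct_self_nonneg (A *ᵥ x)).eq_or_lt with hY | hY
  · rwa [← hY]
  · refine le_of_mul_le_mul_right ?_ hY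
    nlinarith [hupper (A *ᵥ x)]

theorem mul_dotProduct_mulVec_le_mulVec_dotProduct_mulVec (ha : 0 ≤ a)
    (hlower : ∀ x, a * (x ⬝ᵥ x) ≤ x ⬝ᵥ A *ᵥ x) (x : n → ℝ) :
    a * (x ⬝ᵥ A *ᵥ x) ≤ (A *ᵥ x) ⬝ᵥ (A *ᵥ x) := by
  have hY := dotProduct_self_nonneg (A *ᵥ x)
  rcases le_or_gt (x ⬝ᵥ A *ᵥ x) 0 with hP | hP
  · nlinarith
  · refine le_of_mul_le_mul_right ?_ hP
    nlinarith [sq_dotProduct_le x (A *ᵥ x), mul_le_mul_of_nonneg_right (hlower x) hY]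

section Inverse

variable [DecidableEq n] {M : Matrix n n ℝ}

theorem PosDef.mulVec_inv_mulVec (hM : M.PosDef) (y : n → ℝ) : M *ᵥ (M⁻¹ *ᵥ y) = y := by
  rw [mulVec_mulVec, mul_nonsing_inv M hM.det_pos.ne'.isUnit, one_mulVec]

theorem PosDef.dotProduct_self_le_mul_dotProduct_inv_mulVec (hM : M.PosDef)
    (hupper : ∀ x, x ⬝ᵥ M *ᵥ x ≤ b * (x ⬝ᵥ x)) (y : n → ℝ) :
    y ⬝ᵥ y ≤ b * (y ⬝ᵥ M⁻¹ *ᵥ y) := by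
  have h := hM.posSemidef.mulVec_dotProduct_mulVec_le hupper (M⁻¹ *ᵥ y)
  rwa [hM.mulVec_inv_mulVec, dotProduct_comm (M⁻¹ *ᵥ y)] at h

theorem PosDef.mul_dotProduct_inv_mulVec_le (hM : M.PosDef) (ha : 0 ≤ a)
    (hlower : ∀ x, a * (x ⬝ᵥ x) ≤ x ⬝ᵥ M *ᵥ x) (y : n → ℝ) :
    a * (y ⬝ᵥ M⁻¹ *ᵥ y) ≤ y ⬝ᵥ y := by
  have h := mul_dotProduct_mulVec_le_mulVec_dotProduct_mulVec ha hlower (M⁻¹ *ᵥ y)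
  rwa [hM.mulVec_inv_mulVec, dotProduct_comm (M⁻¹ *ᵥ y)] at h

end Inverse

theorem mul_dotProduct_self_le_of_le_div (h : ∀ x : n → ℝ, x ≠ 0 → a ≤ x ⬝ᵥ A *ᵥ x / (x ⬝ᵥ x))
    (x : n → ℝ) : a * (x ⬝ᵥ x) ≤ x ⬝ᵥ A *ᵥ x := by
  rcases eq_or_ne x 0 with rfl | hx
  · simp
  · exact (le_div_iff₀ (dotProduct_self_pos hx)).mp (h x hx)

theorem dotProduct_mulVec_le_of_div_le (h : ∀ x : n → ℝ, x ≠ 0 → x ⬝ᵥ A *ᵥ x / (x ⬝ᵥ x) ≤ b)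
    (x : n → ℝ) : x ⬝ᵥ A *ᵥ x ≤ b * (x ⬝ᵥ x) := by
  rcases eq_or_ne x 0 with rfl | hx
  · simp
  · exact (div_le_iff₀ (dotProduct_self_pos hx)).mp (h x hx)

end Matrix

theorem stmt_6 {m : ℕ} (M K : Matrix (Fin m) (Fin m) ℝ)
    (hM : M.PosDef) (hK : K.PosDef)
    (c₁ c₂ d₁ d₂ h : ℝ) (hc₁ : 0 < c₁) (hc₂ : 0 < c₂)
    (hd₁ : 0 < d₁) (hd₂ : 0 < d₂) (hh : 0 < h)
    (hMbound : ∀ x : Fin m → ℝ, x ≠ 0 →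
      c₁ * h ^ 2 ≤ (x ⬝ᵥ (M *ᵥ x)) / (x ⬝ᵥ x) ∧
      (x ⬝ᵥ (M *ᵥ x)) / (x ⬝ᵥ x) ≤ c₂ * h ^ 2)
    (hKbound : ∀ x : Fin m → ℝ, x ≠ 0 →
      d₁ * h ^ 2 ≤ (x ⬝ᵥ (K *ᵥ x)) / (x ⬝ᵥ x) ∧
      (x ⬝ᵥ (K *ᵥ x)) / (x ⬝ᵥ x) ≤ d₂) :
    ∀ x : Fin m → ℝ, x ≠ 0 →
      d₁ ^ 2 * h ^ 2 / c₂ ≤ (x ⬝ᵥ ((K * M⁻¹ * K) *ᵥ x)) / (x ⬝ᵥ x) ∧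
      (x ⬝ᵥ ((K * M⁻¹ * K) *ᵥ x)) / (x ⬝ᵥ x) ≤ d₂ ^ 2 / (c₁ * h ^ 2) := by
  intro x hx
  have hM₁ := mul_dotProduct_self_le_of_le_div fun x hx => (hMbound x hx).1
  have hM₂ := dotProduct_mulVec_le_of_div_le fun x hx => (hMbound x hx).2
  have hK₁ := mul_dotProduct_self_le_of_le_div fun x hx => (hKbound x hx).1
  have hK₂ := dotProduct_mulVec_le_of_div_le fun x hx => (hKbound x hx).2
  have hc₁h : 0 < c₁ * h ^ 2 := by positivity
  have hd₁h : 0 ≤ d₁ * h ^ 2 := by positivity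
  have hQ : x ⬝ᵥ (K * M⁻¹ * K) *ᵥ x = K *ᵥ x ⬝ᵥ M⁻¹ *ᵥ (K *ᵥ x) := by
    rw [← mulVec_mulVec, ← mulVec_mulVec, hK.isHermitian.dotProduct_mulVec_comm, dotProduct_comm]
  have hKx_lower : d₁ * h ^ 2 * (d₁ * h ^ 2 * (x ⬝ᵥ x)) ≤ K *ᵥ x ⬝ᵥ K *ᵥ x :=
    (mul_le_mul_of_nonneg_left (hK₁ x) hd₁h).trans
      (mul_dotProduct_mulVec_le_mulVec_dotProduct_mulVec hd₁h hK₁ x)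
  have hKx_upper : K *ᵥ x ⬝ᵥ K *ᵥ x ≤ d₂ * (d₂ * (x ⬝ᵥ x)) :=
    (hK.posSemidef.mulVec_dotProduct_mulVec_le hK₂ x).trans
      (mul_le_mul_of_nonneg_left (hK₂ x) hd₂.le)
  have hQ_lower := hM.dotProduct_self_le_mul_dotProduct_inv_mulVec hM₂ (K *ᵥ x)
  have hQ_upper := hM.mul_dotProduct_inv_mulVec_le hc₁h.le hM₁ (K *ᵥ x)
  have hxx := dotProduct_self_pos hx
  rw [hQ, le_div_iff₀ hxx, div_le_iff₀ hxx, div_mul_eq_mul_div, div_le_iff₀ hc₂,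
    div_mul_eq_mul_div, le_div_iff₀ hc₁h]
  constructor <;> nlinarith
end

section
/- Let M, K be symmetric positive definite real m×m matrices with Rayleigh quotient bounds c₁ h² ≤ (xᵀMx)/(xᵀx) ≤ c₂ h² and d₁ h² ≤ (xᵀKx)/(xᵀx) ≤ d₂ for all nonzero x, and let β > 0. Then every eigenvalue λ of P^{-1}A that is not equal to 1 satisfies 2β + c₁² h⁴ / d₂² ≤ λ ≤ 2β + c₂² / d₁². -/
open Matrix

/-! With `w = (x, y, z)`, the equation `A w = λ P w` and `λ ≠ 1` force `z = (2β - λ) x`,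
`K y = M x` and `M y = (λ - 2β) K x`. Put `p = x*Kx`, `q = x*Mx`, `s = y*Ky`. Then `(λ - 2β) p = s`,
and the Cauchy–Schwarz inequalities for the forms of `K` (at `x, y`) and of `M` (at `y, x`) give
`q² ≤ p s` and `p s ≤ q²`. Hence `λ = 2β + (q / p)²`, and the Rayleigh bounds squeeze `q / p`
between `c₁ h² / d₂` and `c₂ / d₁`. -/

open scoped ComplexOrder

namespace Matrix

theorem mulVec_eq_zero_iff_of_isUnit {n 𝕜 : Type*} [Fintype n] [DecidableEq n] [Field 𝕜]
    {A : Matrix n n 𝕜} (hA : IsUnit A) {v : n → 𝕜} : A *ᵥ v = 0 ↔ v = 0 :=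
  (mulVec_injective_iff_isUnit.mpr hA).eq_iff' (mulVec_zero A)

theorem mulVec_eq_smul_mulVec_of_nonsing_inv_mul {n R : Type*} [Fintype n] [DecidableEq n]
    [CommRing R] {A P : Matrix n n R} (hP : IsUnit P) {w : n → R} {c : R}
    (h : (P⁻¹ * A) *ᵥ w = c • w) : A *ᵥ w = c • P *ᵥ w := by
  rw [← mulVec_smul, ← h, mulVec_mulVec,
    mul_nonsing_inv_cancel_left _ _ ((isUnit_iff_isUnit_det P).mp hP)]

section ComplexForms

variable {n : Type*} [Fintype n]

theorem IsHermitian.star_dotProduct_mulVec_eq_conj {H : Matrix n n ℂ} (hH : H.IsHermitian)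
    (x y : n → ℂ) : star x ⬝ᵥ (H *ᵥ y) = starRingEnd ℂ (star y ⬝ᵥ (H *ᵥ x)) := by
  rw [starRingEnd_apply, ← star_dotProduct_star, star_star, star_mulVec, ← dotProduct_mulVec,
    hH.eq]

theorem PosSemidef.star_dotProduct_mulVec_eq_re {H : Matrix n n ℂ} (hH : H.PosSemidef)
    (x : n → ℂ) : star x ⬝ᵥ (H *ᵥ x) = (star x ⬝ᵥ (H *ᵥ x)).re :=
  Complex.eq_re_of_ofReal_le (r := 0) <| by
    rw [Complex.ofReal_zero]; exact hH.dotProduct_mulVec_nonneg x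

theorem PosSemidef.sq_le_re_mul_re {H : Matrix n n ℂ} (hH : H.PosSemidef) {x y : n → ℂ} {r : ℝ}
    (hr : star x ⬝ᵥ (H *ᵥ y) = r) :
    r ^ 2 ≤ (star x ⬝ᵥ (H *ᵥ x)).re * (star y ⬝ᵥ (H *ᵥ y)).re := by
  let _ := H.toSeminormedAddCommGroup hH
  let _ := H.toInnerProductSpace hH
  have hinner (u v : n → ℂ) : inner ℂ u v = star u ⬝ᵥ (H *ᵥ v) := dotProduct_comm _ _
  have hcs := inner_mul_inner_self_le (𝕜 := ℂ) x y
  rwa [hinner, hinner, hinner, hinner, hr, hH.1.star_dotProduct_mulVec_eq_conj, hr,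
    Complex.conj_ofReal, Complex.norm_real, Real.norm_eq_abs, ← sq, sq_abs] at hcs

theorem star_ofReal_dotProduct_map_ofReal_mulVec (S : Matrix n n ℝ) (u v : n → ℝ) :
    star (Complex.ofReal ∘ u) ⬝ᵥ (S.map Complex.ofReal *ᵥ (Complex.ofReal ∘ v)) =
      ((u ⬝ᵥ (S *ᵥ v) : ℝ) : ℂ) := by
  have hstar : star (Complex.ofReal ∘ u) = Complex.ofReal ∘ u := by
    funext i; simp
  have hmulVec : S.map Complex.ofReal *ᵥ (Complex.ofReal ∘ v) = Complex.ofReal ∘ (S *ᵥ v) := by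
    funext i; exact (RingHom.map_mulVec Complex.ofRealHom S v i).symm
  rw [hstar, hmulVec]
  exact (RingHom.map_dotProduct Complex.ofRealHom u (S *ᵥ v)).symm

theorem star_dotProduct_map_ofReal_mulVec {S : Matrix n n ℝ} (hS : S.IsSymm) (x : n → ℂ) :
    star x ⬝ᵥ (S.map Complex.ofReal *ᵥ x) =
      (((Complex.re ∘ x) ⬝ᵥ (S *ᵥ (Complex.re ∘ x)) +
        (Complex.im ∘ x) ⬝ᵥ (S *ᵥ (Complex.im ∘ x)) : ℝ) : ℂ) := by
  set a := Complex.re ∘ x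
  set b := Complex.im ∘ x
  have hx : x = Complex.ofReal ∘ a + Complex.I • (Complex.ofReal ∘ b) := by
    funext i
    simp only [Pi.add_apply, Pi.smul_apply, Function.comp_apply, smul_eq_mul, a, b]
    rw [mul_comm, Complex.re_add_im]
  have hsymm : b ⬝ᵥ (S *ᵥ a) = a ⬝ᵥ (S *ᵥ b) := by
    rw [dotProduct_mulVec, ← mulVec_transpose, hS.eq, dotProduct_comm]
  rw [hx]
  simp only [star_add, star_smul, mulVec_add, mulVec_smul, dotProduct_add, add_dotProduct,
    dotProduct_smul, smul_dotProduct, star_ofReal_dotProduct_map_ofReal_mulVec, hsymm,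
    Complex.star_def, Complex.conj_I, smul_eq_mul]
  push_cast
  linear_combination (-((b ⬝ᵥ (S *ᵥ b) : ℝ) : ℂ)) * Complex.I_sq

theorem re_star_dotProduct_self (x : n → ℂ) :
    (star x ⬝ᵥ x).re =
      (Complex.re ∘ x) ⬝ᵥ (Complex.re ∘ x) + (Complex.im ∘ x) ⬝ᵥ (Complex.im ∘ x) := by
  classical
  have h := star_dotProduct_map_ofReal_mulVec (isSymm_one (n := n) (α := ℝ)) x
  rw [Matrix.map_one _ Complex.ofReal_zero Complex.ofReal_one, one_mulVec] at h
  simp [h]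

theorem PosSemidef.map_ofReal {S : Matrix n n ℝ} (hS : S.PosSemidef) :
    (S.map Complex.ofReal).PosSemidef := by
  refine .of_dotProduct_mulVec_nonneg (hS.isHermitian.map _ fun r => by simp) fun x => ?_
  rw [star_dotProduct_map_ofReal_mulVec (isHermitian_iff_isSymm.mp hS.isHermitian)]
  have hS' (u : n → ℝ) : 0 ≤ u ⬝ᵥ (S *ᵥ u) := by simpa using hS.dotProduct_mulVec_nonneg u
  exact_mod_cast add_nonneg (hS' _) (hS' _)

theorem rayleigh_bounds_of_forall_ne_zero {S : Matrix n n ℝ} {a b : ℝ}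
    (h : ∀ u : n → ℝ, u ≠ 0 →
      a ≤ (u ⬝ᵥ (S *ᵥ u)) / (u ⬝ᵥ u) ∧ (u ⬝ᵥ (S *ᵥ u)) / (u ⬝ᵥ u) ≤ b) (u : n → ℝ) :
    a * (u ⬝ᵥ u) ≤ u ⬝ᵥ (S *ᵥ u) ∧ u ⬝ᵥ (S *ᵥ u) ≤ b * (u ⬝ᵥ u) := by
  rcases eq_or_ne u 0 with rfl | hu
  · simp
  have hpos : 0 < u ⬝ᵥ u := by simpa using dotProduct_star_self_pos_iff.mpr hu
  exact (h u hu).imp (fun h => (le_div_iff₀ hpos).mp h) (fun h => (div_le_iff₀ hpos).mp h)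

theorem rayleigh_bounds_map_ofReal {S : Matrix n n ℝ} (hS : S.IsSymm) {a b : ℝ}
    (h : ∀ u : n → ℝ, a * (u ⬝ᵥ u) ≤ u ⬝ᵥ (S *ᵥ u) ∧ u ⬝ᵥ (S *ᵥ u) ≤ b * (u ⬝ᵥ u))
    (x : n → ℂ) :
    a * (star x ⬝ᵥ x).re ≤ (star x ⬝ᵥ (S.map Complex.ofReal *ᵥ x)).re ∧
      (star x ⬝ᵥ (S.map Complex.ofReal *ᵥ x)).re ≤ b * (star x ⬝ᵥ x).re := by
  rw [star_dotProduct_map_ofReal_mulVec hS, Complex.ofReal_re, re_star_dotProduct_self]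
  obtain ⟨hre₁, hre₂⟩ := h (Complex.re ∘ x)
  obtain ⟨him₁, him₂⟩ := h (Complex.im ∘ x)
  constructor <;> linarith

theorem eq_sq_div_of_mulVec_eq {M K : Matrix n n ℂ} (hM : M.PosSemidef) (hK : K.PosSemidef)
    {x y : n → ℂ} {μ : ℂ} (hKy : K *ᵥ y = M *ᵥ x) (hMy : M *ᵥ y = μ • K *ᵥ x)
    (hp : 0 < (star x ⬝ᵥ (K *ᵥ x)).re) :
    μ = (((star x ⬝ᵥ (M *ᵥ x)).re / (star x ⬝ᵥ (K *ᵥ x)).re) ^ 2 : ℝ) := by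
  set p := (star x ⬝ᵥ (K *ᵥ x)).re
  set q := (star x ⬝ᵥ (M *ᵥ x)).re
  set s := (star y ⬝ᵥ (K *ᵥ y)).re
  set t := (star y ⬝ᵥ (M *ᵥ y)).re
  have hxKy : star x ⬝ᵥ (K *ᵥ y) = q := by rw [hKy, hM.star_dotProduct_mulVec_eq_re]
  have hyMx : star y ⬝ᵥ (M *ᵥ x) = s := by rw [← hKy, hK.star_dotProduct_mulVec_eq_re]
  have hμp : μ * p = s := by
    rw [← hK.star_dotProduct_mulVec_eq_re, ← smul_eq_mul, ← dotProduct_smul, ← hMy,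
      hM.1.star_dotProduct_mulVec_eq_conj, hyMx, Complex.conj_ofReal]
  have hμq : (t : ℂ) = μ * q := by
    rw [← hM.star_dotProduct_mulVec_eq_re, hMy, dotProduct_smul,
      hK.1.star_dotProduct_mulVec_eq_conj, hxKy, Complex.conj_ofReal, smul_eq_mul]
  have hμ : μ = ((s / p : ℝ) : ℂ) := by
    rw [Complex.ofReal_div, eq_div_iff (by exact_mod_cast hp.ne'), hμp]
  have ht : t = s / p * q := by rw [hμ] at hμq; exact_mod_cast hμq
  have hcsK : q ^ 2 ≤ p * s := hK.sq_le_re_mul_re hxKy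
  have hcsM : s ^ 2 ≤ t * q := hM.sq_le_re_mul_re hyMx
  have hs : 0 ≤ s := hK.re_dotProduct_nonneg y
  have hsp : s * p = q ^ 2 := by
    rw [ht, div_mul_eq_mul_div, div_mul_eq_mul_div, le_div_iff₀ hp] at hcsM
    nlinarith
  rw [hμ, div_pow, ← hsp]
  congr 1
  field_simp

end ComplexForms

end Matrix

section BlockPencil

variable {m : ℕ}

theorem vec3_inj {R : Type*} {x y z x' y' z' : Fin m → R} :
    vec3 x y z = vec3 x' y' z' ↔ x = x' ∧ y = y' ∧ z = z' := by
  simp only [vec3, Sum.elim_eq_iff]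

theorem vec3_zero {R : Type*} [Zero R] : vec3 (0 : Fin m → R) 0 0 = 0 := by
  funext i; rcases i with i | i | i <;> rfl

theorem vec3_smul {R : Type*} [Mul R] (c : R) (x y z : Fin m → R) :
    vec3 (c • x) (c • y) (c • z) = c • vec3 x y z := by
  funext i; rcases i with i | i | i <;> rfl

theorem vec3_eta {R : Type*} (w : Fin m ⊕ (Fin m ⊕ Fin m) → R) :
    vec3 (fun i => w (.inl i)) (fun i => w (.inr (.inl i))) (fun i => w (.inr (.inr i))) = w := by
  funext i; rcases i with i | i | i <;> rfl

theorem blk3_mulVec_vec3 {R : Type*} [NonUnitalNonAssocSemiring R]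
    (A B C D E F G H I : Matrix (Fin m) (Fin m) R) (x y z : Fin m → R) :
    blk3 m A B C D E F G H I *ᵥ vec3 x y z =
      vec3 (A *ᵥ x + B *ᵥ y + C *ᵥ z) (D *ᵥ x + E *ᵥ y + F *ᵥ z) (G *ᵥ x + H *ᵥ y + I *ᵥ z) := by
  funext i
  rcases i with i | i | i <;>
    simp [blk3, vec3, mulVec, dotProduct, Fintype.sum_sum_type, add_assoc]

variable {𝕜 : Type*} [Field 𝕜] {M K : Matrix (Fin m) (Fin m) 𝕜}

theorem isUnit_blk3_pencil (hM : IsUnit M) (hK : IsUnit K) :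
    IsUnit (blk3 m 0 K 0 0 M K (-M) K 0) := by
  rw [isUnit_iff_isUnit_det, isUnit_iff_ne_zero, ne_eq, ← exists_mulVec_eq_zero_iff]
  rintro ⟨w, hw, hPw⟩
  obtain ⟨x, y, z, rfl⟩ : ∃ x y z, vec3 x y z = w := ⟨_, _, _, vec3_eta w⟩
  rw [blk3_mulVec_vec3, ← vec3_zero, vec3_inj] at hPw
  simp only [zero_mulVec, add_zero, zero_add, neg_mulVec] at hPw
  obtain ⟨hKy, hMy, hMx⟩ := hPw
  obtain rfl := (mulVec_eq_zero_iff_of_isUnit hK).mp hKy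
  rw [mulVec_zero, zero_add, mulVec_eq_zero_iff_of_isUnit hK] at hMy
  rw [mulVec_zero, add_zero, neg_eq_zero, mulVec_eq_zero_iff_of_isUnit hM] at hMx
  exact hw (by rw [hMx, hMy, vec3_zero])

theorem pencil_eigenvector (hM : IsUnit M) {c lam : 𝕜} (hlam : lam ≠ 1)
    {x y z : Fin m → 𝕜} (hw : vec3 x y z ≠ 0)
    (h : blk3 m (c • M) 0 (-M) 0 M K (-M) K 0 *ᵥ vec3 x y z =
      lam • blk3 m 0 K 0 0 M K (-M) K 0 *ᵥ vec3 x y z) :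
    x ≠ 0 ∧ K *ᵥ y = M *ᵥ x ∧ M *ᵥ y = (lam - c) • K *ᵥ x := by
  rw [blk3_mulVec_vec3, blk3_mulVec_vec3, ← vec3_smul, vec3_inj] at h
  simp only [zero_mulVec, add_zero, zero_add, neg_mulVec, smul_mulVec] at h
  obtain ⟨h₁, h₂, h₃⟩ := h
  have fixed (v : Fin m → 𝕜) (hv : v = lam • v) : v = 0 := by
    have : (1 - lam) • v = 0 := by rw [sub_smul, one_smul, ← hv, sub_self]
    exact (smul_eq_zero.mp this).resolve_left (sub_ne_zero.mpr hlam.symm)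
  have hKy : K *ᵥ y = M *ᵥ x := (neg_add_eq_zero.mp (fixed _ h₃)).symm
  have hz : z = (c - lam) • x := by
    rw [← sub_eq_zero, ← mulVec_eq_zero_iff_of_isUnit hM, mulVec_sub, mulVec_smul]
    rw [hKy] at h₁
    linear_combination (norm := module) -h₁
  have hMy : M *ᵥ y = (lam - c) • K *ᵥ x := by
    rw [eq_neg_of_add_eq_zero_left (fixed _ h₂), hz, mulVec_smul, ← neg_smul, neg_sub]
  refine ⟨fun hx => hw ?_, hKy, hMy⟩
  rw [hx, mulVec_zero, smul_zero, mulVec_eq_zero_iff_of_isUnit hM] at hMy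
  rw [hz, hx, hMy, smul_zero, vec3_zero]

end BlockPencil

theorem sq_div_mem_Icc {a b c d N q p : ℝ} (ha : 0 ≤ a) (hc : 0 < c) (hN : 0 < N)
    (hq : a * N ≤ q ∧ q ≤ b * N) (hp : c * N ≤ p ∧ p ≤ d * N) :
    (q / p) ^ 2 ∈ Set.Icc ((a / d) ^ 2) ((b / c) ^ 2) := by
  have hp0 : 0 < p := lt_of_lt_of_le (by positivity) hp.1
  have hd : 0 < d := pos_of_mul_pos_left (hp0.trans_le hp.2) hN.le
  have hlo : a / d ≤ q / p := by
    rw [← mul_div_mul_right a d hN.ne']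
    exact div_le_div₀ (by nlinarith) hq.1 hp0 hp.2
  have hhi : q / p ≤ b / c := by
    rw [← mul_div_mul_right b c hN.ne']
    exact div_le_div₀ (by nlinarith) hq.2 (by positivity) hp.1
  exact ⟨pow_le_pow_left₀ (by positivity) hlo 2,
    pow_le_pow_left₀ ((by positivity : 0 ≤ a / d).trans hlo) hhi 2⟩

theorem stmt_7_general {m : ℕ} (M K : Matrix (Fin m) (Fin m) ℝ)
    (hM : M.PosDef) (hK : K.PosDef) (β : ℝ)
    (c₁ c₂ d₁ d₂ h : ℝ) (hc₁ : 0 < c₁)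
    (hd₁ : 0 < d₁) (hh : 0 < h)
    (hMbound : ∀ x : Fin m → ℝ, x ≠ 0 →
      c₁ * h ^ 2 ≤ (x ⬝ᵥ (M *ᵥ x)) / (x ⬝ᵥ x) ∧
      (x ⬝ᵥ (M *ᵥ x)) / (x ⬝ᵥ x) ≤ c₂ * h ^ 2)
    (hKbound : ∀ x : Fin m → ℝ, x ≠ 0 →
      d₁ * h ^ 2 ≤ (x ⬝ᵥ (K *ᵥ x)) / (x ⬝ᵥ x) ∧
      (x ⬝ᵥ (K *ᵥ x)) / (x ⬝ᵥ x) ≤ d₂)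
    (Mc : Matrix (Fin m) (Fin m) ℂ) (hMc : Mc = M.map Complex.ofReal)
    (Kc : Matrix (Fin m) (Fin m) ℂ) (hKc : Kc = K.map Complex.ofReal)
    (A P : Matrix (Fin m ⊕ (Fin m ⊕ Fin m)) (Fin m ⊕ (Fin m ⊕ Fin m)) ℂ)
    (hA : A = blk3 m ((2 * (β : ℂ)) • Mc) 0 (-Mc) 0 Mc Kc (-Mc) Kc 0)
    (hP : P = blk3 m 0 Kc 0 0 Mc Kc (-Mc) Kc 0)
    (lam : ℂ) (hlam : lam ≠ 1)
    (heig : ∃ w : Fin m ⊕ (Fin m ⊕ Fin m) → ℂ, w ≠ 0 ∧ (P⁻¹ * A) *ᵥ w = lam • w) :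
    lam.im = 0 ∧
      2 * β + c₁ ^ 2 * h ^ 4 / d₂ ^ 2 ≤ lam.re ∧
      lam.re ≤ 2 * β + c₂ ^ 2 / d₁ ^ 2 := by
  obtain ⟨w, hw, hPAw⟩ := heig
  obtain ⟨x, y, z, rfl⟩ : ∃ x y z, vec3 x y z = w := ⟨_, _, _, vec3_eta w⟩
  subst hMc hKc hA hP
  have hMunit : IsUnit (M.map Complex.ofReal) := hM.isUnit.map Complex.ofRealHom.mapMatrix
  have hKunit : IsUnit (K.map Complex.ofReal) := hK.isUnit.map Complex.ofRealHom.mapMatrix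
  obtain ⟨hx, hKy, hMy⟩ := pencil_eigenvector hMunit hlam hw
    (mulVec_eq_smul_mulVec_of_nonsing_inv_mul (isUnit_blk3_pencil hMunit hKunit) hPAw)
  obtain ⟨hq₁, hq₂⟩ := rayleigh_bounds_map_ofReal (isHermitian_iff_isSymm.mp hM.isHermitian)
    (rayleigh_bounds_of_forall_ne_zero hMbound) x
  obtain ⟨hp₁, hp₂⟩ := rayleigh_bounds_map_ofReal (isHermitian_iff_isSymm.mp hK.isHermitian)
    (rayleigh_bounds_of_forall_ne_zero hKbound) x
  set q := (star x ⬝ᵥ (M.map Complex.ofReal *ᵥ x)).re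
  set p := (star x ⬝ᵥ (K.map Complex.ofReal *ᵥ x)).re
  have hN : 0 < (star x ⬝ᵥ x).re := (Complex.pos_iff.mp (dotProduct_star_self_pos_iff.mpr hx)).1
  have hp : 0 < p := lt_of_lt_of_le (by positivity) hp₁
  have hμ : lam - 2 * β = ((q / p) ^ 2 : ℝ) :=
    eq_sq_div_of_mulVec_eq hM.posSemidef.map_ofReal hK.posSemidef.map_ofReal hKy hMy hp
  have hlam_eq : lam = ((2 * β + (q / p) ^ 2 : ℝ) : ℂ) := by
    rw [Complex.ofReal_add, ← hμ]; push_cast; ring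
  obtain ⟨hlo, hhi⟩ := sq_div_mem_Icc (by positivity) (by positivity) hN ⟨hq₁, hq₂⟩ ⟨hp₁, hp₂⟩
  rw [hlam_eq, Complex.ofReal_im, Complex.ofReal_re]
  refine ⟨rfl, ?_, ?_⟩
  · linarith [show (c₁ * h ^ 2 / d₂) ^ 2 = c₁ ^ 2 * h ^ 4 / d₂ ^ 2 by ring]
  · linarith [show (c₂ * h ^ 2 / (d₁ * h ^ 2)) ^ 2 = c₂ ^ 2 / d₁ ^ 2 by field_simp]

theorem stmt_7 {m : ℕ} (M K : Matrix (Fin m) (Fin m) ℝ)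
    (hM : M.PosDef) (hK : K.PosDef) (β : ℝ) (hβ : 0 < β)
    (c₁ c₂ d₁ d₂ h : ℝ) (hc₁ : 0 < c₁) (hc₂ : 0 < c₂)
    (hd₁ : 0 < d₁) (hd₂ : 0 < d₂) (hh : 0 < h)
    (hMbound : ∀ x : Fin m → ℝ, x ≠ 0 →
      c₁ * h ^ 2 ≤ (x ⬝ᵥ (M *ᵥ x)) / (x ⬝ᵥ x) ∧
      (x ⬝ᵥ (M *ᵥ x)) / (x ⬝ᵥ x) ≤ c₂ * h ^ 2)
    (hKbound : ∀ x : Fin m → ℝ, x ≠ 0 →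
      d₁ * h ^ 2 ≤ (x ⬝ᵥ (K *ᵥ x)) / (x ⬝ᵥ x) ∧
      (x ⬝ᵥ (K *ᵥ x)) / (x ⬝ᵥ x) ≤ d₂)
    (Mc : Matrix (Fin m) (Fin m) ℂ) (hMc : Mc = M.map Complex.ofReal)
    (Kc : Matrix (Fin m) (Fin m) ℂ) (hKc : Kc = K.map Complex.ofReal)
    (A P : Matrix (Fin m ⊕ (Fin m ⊕ Fin m)) (Fin m ⊕ (Fin m ⊕ Fin m)) ℂ)
    (hA : A = blk3 m ((2 * (β : ℂ)) • Mc) 0 (-Mc) 0 Mc Kc (-Mc) Kc 0)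
    (hP : P = blk3 m 0 Kc 0 0 Mc Kc (-Mc) Kc 0)
    (lam : ℂ) (hlam : lam ≠ 1)
    (heig : ∃ w : Fin m ⊕ (Fin m ⊕ Fin m) → ℂ, w ≠ 0 ∧ (P⁻¹ * A) *ᵥ w = lam • w) :
    lam.im = 0 ∧
      2 * β + c₁ ^ 2 * h ^ 4 / d₂ ^ 2 ≤ lam.re ∧
      lam.re ≤ 2 * β + c₂ ^ 2 / d₁ ^ 2 :=
  stmt_7_general M K hM hK β c₁ c₂ d₁ d₂ h hc₁ hd₁ hh hMbound hKbound Mc hMc Kc hKc A P hA hP lam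
    hlam heig
end
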